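/- arXiv:2405.11943 — 3 statements merged into one kernel-verified Lean document; each statement's English description precedes it below -/
import Mathlib

section
/- Let R = ℚ[c₁,c₂,c₃]. For every integer d ≥ 1, the remainder of h²·((d−1)³h³ − (d−1)²c₁h² + (d−1)c₂h − c₃) upon division by h³ + c₁h² + c₂h + c₃ in R[h] has coefficient of h² equal to −d(d²−3d+3)·c₃ + d(d−1)(2d−3)·c₁c₂ − d(d−1)²·c₁³. -/
noncomputable section

abbrev R3 : Type := MvPolynomial (Fin 3) ℚ

noncomputable def cc (i : Fin 3) : R3 := MvPolynomial.X i

/-- The monic cubic relation h³ + c₁h² + c₂h + c₃. -/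
noncomputable def Mrel : Polynomial R3 :=
  Polynomial.X ^ 3 + Polynomial.C (cc 0) * Polynomial.X ^ 2 +
    Polynomial.C (cc 1) * Polynomial.X + Polynomial.C (cc 2)

/-- The equivariant Euler class (d−1)³h³ − (d−1)²c₁h² + (d−1)c₂h − c₃. -/
noncomputable def Ecl (d : ℕ) : Polynomial R3 :=
  Polynomial.C (((d : R3) - 1) ^ 3) * Polynomial.X ^ 3
    - Polynomial.C (((d : R3) - 1) ^ 2 * cc 0) * Polynomial.X ^ 2
    + Polynomial.C (((d : R3) - 1) * cc 1) * Polynomial.X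
    - Polynomial.C (cc 2)

open Polynomial

namespace Polynomial

variable {R : Type*} [CommRing R] (a b c : R)

theorem X_pow_three_add_quadratic_eq :
    (X ^ 3 + C a * X ^ 2 + C b * X + C c : R[X]) = X ^ 3 + (C a * X ^ 2 + C b * X + C c) := by
  ring

theorem monic_X_pow_three_add_quadratic : (X ^ 3 + C a * X ^ 2 + C b * X + C c : R[X]).Monic := by
  rw [X_pow_three_add_quadratic_eq]
  exact monic_X_pow_add (degree_quadratic_le.trans_lt (by norm_num))

theorem degree_X_pow_three_add_quadratic [Nontrivial R] :
    (X ^ 3 + C a * X ^ 2 + C b * X + C c : R[X]).degree = 3 := by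
  rw [X_pow_three_add_quadratic_eq, degree_add_eq_left_of_degree_lt] <;> rw [degree_X_pow]
  · rfl
  · exact degree_quadratic_le.trans_lt (by norm_num)

/-- The coefficients `1, -a, a² - b, -a³ + 2ab - c` of `e₀, …, e₃` are the `X²`-coefficients of
`X², …, X⁵ %ₘ (X³ + aX² + bX + c)`, namely the complete homogeneous symmetric polynomials
`h₀, …, h₃` in the roots of the cubic. -/
theorem coeff_two_X_sq_mul_cubic_modByMonic [Nontrivial R] (e₀ e₁ e₂ e₃ : R) :
    ((X ^ 2 * (C e₃ * X ^ 3 + C e₂ * X ^ 2 + C e₁ * X + C e₀)) %ₘ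
        (X ^ 3 + C a * X ^ 2 + C b * X + C c)).coeff 2
      = e₀ - a * e₁ + (a ^ 2 - b) * e₂ + (-a ^ 3 + 2 * a * b - c) * e₃ := by
  set q₁ := e₂ - a * e₃
  set q₀ := e₁ - b * e₃ - a * q₁
  rw [(div_modByMonic_unique (C e₃ * X ^ 2 + C q₁ * X + C q₀)
    (C (e₀ - c * e₃ - b * q₁ - a * q₀) * X ^ 2 + C (-(c * q₁) - b * q₀) * X + C (-(c * q₀)))
    (monic_X_pow_three_add_quadratic a b c) ⟨?division, ?degree⟩).2]
  · simp only [coeff_add, coeff_C_mul, coeff_X_pow, coeff_X, coeff_C]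
    norm_num [q₁, q₀]
    ring
  case division =>
    simp only [q₁, q₀, map_sub, map_mul, map_neg]
    ring
  case degree =>
    rw [degree_X_pow_three_add_quadratic]
    exact degree_quadratic_le.trans_lt (by norm_num)

end Polynomial

theorem stmt_2_general (d : ℕ) :
    ((Polynomial.X ^ 2 * Ecl d) %ₘ Mrel).coeff 2
    = -(d : R3) * ((d : R3) ^ 2 - 3 * (d : R3) + 3) * cc 2
      + (d : R3) * ((d : R3) - 1) * (2 * (d : R3) - 3) * (cc 0 * cc 1)
      - (d : R3) * ((d : R3) - 1) ^ 2 * cc 0 ^ 3 := by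
  have hEcl : Ecl d = C (((d : R3) - 1) ^ 3) * X ^ 3 + C (-(((d : R3) - 1) ^ 2 * cc 0)) * X ^ 2
      + C (((d : R3) - 1) * cc 1) * X + C (-cc 2) := by
    simp only [Ecl, map_neg]
    ring
  rw [hEcl, Mrel, coeff_two_X_sq_mul_cubic_modByMonic]
  ring

theorem stmt_2 (d : ℕ) (hd : 1 ≤ d) :
    ((Polynomial.X ^ 2 * Ecl d) %ₘ Mrel).coeff 2
    = -(d : R3) * ((d : R3) ^ 2 - 3 * (d : R3) + 3) * cc 2
      + (d : R3) * ((d : R3) - 1) * (2 * (d : R3) - 3) * (cc 0 * cc 1)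
      - (d : R3) * ((d : R3) - 1) ^ 2 * cc 0 ^ 3 :=
  stmt_2_general d
end
end

section
/- For every integer d ≥ 3, the ideal of ℚ[c₁,c₂,c₃] generated by the three elements r₀ = −d(d−1)²c₁, r₁ = −d(d−1)(d−2)c₂ + d(d−1)²c₁², and r₂ = −d(d²−3d+3)c₃ + d(d−1)(2d−3)c₁c₂ − d(d−1)²c₁³ equals the ideal (c₁, c₂, c₃). Consequently the quotient ring ℚ[c₁,c₂,c₃]/(r₀, r₁, r₂) is isomorphic to ℚ. -/
noncomputable section

open MvPolynomial

lemma ker_aeval0 :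
    RingHom.ker ((aeval (0 : Fin 3 → ℚ) : R3 →ₐ[ℚ] ℚ) : R3 →+* ℚ)
      = Ideal.span {cc 0, cc 1, cc 2} := by
  have himg : (X '' (Set.univ : Set (Fin 3)) : Set R3) = {cc 0, cc 1, cc 2} := by
    ext p
    simp only [Set.image_univ, Set.mem_range, Set.mem_insert_iff, Set.mem_singleton_iff, cc]
    constructor
    · rintro ⟨i, rfl⟩; fin_cases i <;> simp
    · rintro (rfl | rfl | rfl) <;> [exact ⟨0, rfl⟩; exact ⟨1, rfl⟩; exact ⟨2, rfl⟩]
  ext p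
  rw [RingHom.mem_ker, ← himg, mem_ideal_span_X_image]
  have heval : (aeval (0 : Fin 3 → ℚ) : R3 →ₐ[ℚ] ℚ) p = p.coeff 0 := by
    simp [aeval_zero', constantCoeff_eq]
  constructor
  · intro hp m hm
    have h0 : p.coeff 0 = 0 := by rw [← heval]; exact hp
    have hm0 : m ≠ 0 := by
      rintro rfl
      exact (mem_support_iff.mp hm) h0
    obtain ⟨i, hi⟩ := Finsupp.ne_iff.mp hm0
    exact ⟨i, Set.mem_univ i, by simpa using hi⟩
  · intro h
    show (aeval (0 : Fin 3 → ℚ) : R3 →ₐ[ℚ] ℚ) p = 0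
    rw [heval]
    by_contra h0
    obtain ⟨i, _, hi⟩ := h 0 (mem_support_iff.mpr h0)
    simp at hi

lemma ideal_eq (d : ℕ) (hd : 3 ≤ d) :
    Ideal.span {(-(d : R3) * ((d : R3) - 1) ^ 2 * cc 0 : R3),
        (-(d : R3) * ((d : R3) - 1) * ((d : R3) - 2) * cc 1
          + (d : R3) * ((d : R3) - 1) ^ 2 * cc 0 ^ 2 : R3),
        (-(d : R3) * ((d : R3) ^ 2 - 3 * (d : R3) + 3) * cc 2
          + (d : R3) * ((d : R3) - 1) * (2 * (d : R3) - 3) * (cc 0 * cc 1)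
          - (d : R3) * ((d : R3) - 1) ^ 2 * cc 0 ^ 3 : R3)}
      = Ideal.span {cc 0, cc 1, cc 2} := by
  set q : ℚ := (d : ℚ) with hq
  have hq3 : (3 : ℚ) ≤ q := by rw [hq]; exact_mod_cast hd
  have hdc : (d : R3) = C q := by simp [hq]
  set r0 : R3 := (-(d : R3) * ((d : R3) - 1) ^ 2 * cc 0 : R3) with hr0d
  set r1 : R3 := (-(d : R3) * ((d : R3) - 1) * ((d : R3) - 2) * cc 1
          + (d : R3) * ((d : R3) - 1) ^ 2 * cc 0 ^ 2 : R3) with hr1d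
  set r2 : R3 := (-(d : R3) * ((d : R3) ^ 2 - 3 * (d : R3) + 3) * cc 2
          + (d : R3) * ((d : R3) - 1) * (2 * (d : R3) - 3) * (cc 0 * cc 1)
          - (d : R3) * ((d : R3) - 1) ^ 2 * cc 0 ^ 3 : R3) with hr2d
  set a0 : ℚ := -q * (q - 1) ^ 2 with ha0d
  set a1 : ℚ := -q * (q - 1) * (q - 2) with ha1d
  set a2 : ℚ := -q * (q ^ 2 - 3 * q + 3) with ha2d
  set b1 : ℚ := q * (q - 1) ^ 2 with hb1d
  set b2 : ℚ := q * (q - 1) * (2 * q - 3) with hb2d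
  have ha0 : a0 ≠ 0 := by rw [ha0d]; nlinarith
  have ha1 : a1 ≠ 0 := by rw [ha1d]; nlinarith
  have ha2 : a2 ≠ 0 := by rw [ha2d]; nlinarith
  have hr0 : r0 = C a0 * cc 0 := by
    rw [hr0d, hdc, ha0d]; push_cast [map_mul, map_neg, map_sub, map_one, map_pow]; ring
  have hr1 : r1 = C a1 * cc 1 + C b1 * cc 0 ^ 2 := by
    rw [hr1d, hdc, ha1d, hb1d]
    push_cast [map_mul, map_neg, map_sub, map_one, map_pow, map_ofNat]; ring
  have hr2 : r2 = C a2 * cc 2 + C b2 * (cc 0 * cc 1) - C b1 * cc 0 ^ 3 := by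
    rw [hr2d, hdc, ha2d, hb2d, hb1d]
    push_cast [map_mul, map_neg, map_sub, map_add, map_one, map_pow, map_ofNat]; ring
  apply le_antisymm
  · rw [Ideal.span_le]
    have h0 : cc 0 ∈ Ideal.span {cc 0, cc 1, cc 2} := Ideal.subset_span (by simp)
    have h1 : cc 1 ∈ Ideal.span {cc 0, cc 1, cc 2} := Ideal.subset_span (by simp)
    have h2 : cc 2 ∈ Ideal.span {cc 0, cc 1, cc 2} := Ideal.subset_span (by simp)
    rintro x (rfl | rfl | rfl)
    · exact Ideal.mul_mem_left _ _ h0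
    · exact add_mem (Ideal.mul_mem_left _ _ h1)
        (by rw [sq]; exact Ideal.mul_mem_left _ _ (Ideal.mul_mem_left _ _ h0))
    · refine sub_mem (add_mem (Ideal.mul_mem_left _ _ h2)
        (Ideal.mul_mem_left _ _ (Ideal.mul_mem_left _ _ h1))) ?_
      rw [pow_succ]
      exact Ideal.mul_mem_left _ _ (Ideal.mul_mem_left _ _ h0)
  · rw [Ideal.span_le]
    set T := Ideal.span {r0, r1, r2} with hT
    have hm0 : r0 ∈ T := Ideal.subset_span (by simp)
    have hm1 : r1 ∈ T := Ideal.subset_span (by simp)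
    have hm2 : r2 ∈ T := Ideal.subset_span (by simp)
    have hc0 : cc 0 ∈ T := by
      have : cc 0 = C a0⁻¹ * r0 := by
        rw [hr0, ← mul_assoc, ← C_mul, inv_mul_cancel₀ ha0, C_1, one_mul]
      rw [this]; exact Ideal.mul_mem_left _ _ hm0
    have hc1 : cc 1 ∈ T := by
      have h : r1 - C b1 * cc 0 ^ 2 = C a1 * cc 1 := by rw [hr1]; ring
      have key : cc 1 = C a1⁻¹ * (r1 - C b1 * cc 0 ^ 2) := by
        rw [h, ← mul_assoc, ← C_mul, inv_mul_cancel₀ ha1, C_1, one_mul]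
      rw [key]
      refine Ideal.mul_mem_left _ _ (sub_mem hm1 ?_)
      rw [sq]; exact Ideal.mul_mem_left _ _ (Ideal.mul_mem_left _ _ hc0)
    have hc2 : cc 2 ∈ T := by
      have h : r2 - C b2 * (cc 0 * cc 1) + C b1 * cc 0 ^ 3 = C a2 * cc 2 := by
        rw [hr2]; ring
      have key : cc 2 = C a2⁻¹ * (r2 - C b2 * (cc 0 * cc 1) + C b1 * cc 0 ^ 3) := by
        rw [h, ← mul_assoc, ← C_mul, inv_mul_cancel₀ ha2, C_1, one_mul]
      rw [key]
      refine Ideal.mul_mem_left _ _ (add_mem (sub_mem hm2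
        (Ideal.mul_mem_left _ _ (Ideal.mul_mem_left _ _ hc1))) ?_)
      rw [pow_succ]
      exact Ideal.mul_mem_left _ _ (Ideal.mul_mem_left _ _ hc0)
    rintro x (rfl | rfl | rfl) <;> assumption


theorem stmt_3 (d : ℕ) (hd : 3 ≤ d) :
    (Ideal.span {(-(d : R3) * ((d : R3) - 1) ^ 2 * cc 0 : R3),
        (-(d : R3) * ((d : R3) - 1) * ((d : R3) - 2) * cc 1
          + (d : R3) * ((d : R3) - 1) ^ 2 * cc 0 ^ 2 : R3),
        (-(d : R3) * ((d : R3) ^ 2 - 3 * (d : R3) + 3) * cc 2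
          + (d : R3) * ((d : R3) - 1) * (2 * (d : R3) - 3) * (cc 0 * cc 1)
          - (d : R3) * ((d : R3) - 1) ^ 2 * cc 0 ^ 3 : R3)}
      = Ideal.span {cc 0, cc 1, cc 2}) ∧
    Nonempty ((R3 ⧸ Ideal.span {(-(d : R3) * ((d : R3) - 1) ^ 2 * cc 0 : R3),
        (-(d : R3) * ((d : R3) - 1) * ((d : R3) - 2) * cc 1
          + (d : R3) * ((d : R3) - 1) ^ 2 * cc 0 ^ 2 : R3),
        (-(d : R3) * ((d : R3) ^ 2 - 3 * (d : R3) + 3) * cc 2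
          + (d : R3) * ((d : R3) - 1) * (2 * (d : R3) - 3) * (cc 0 * cc 1)
          - (d : R3) * ((d : R3) - 1) ^ 2 * cc 0 ^ 3 : R3)}) ≃+* ℚ) := by
  refine ⟨ideal_eq d hd, ?_⟩
  rw [ideal_eq d hd]
  have hsurj : Function.Surjective
      ((aeval (0 : Fin 3 → ℚ) : R3 →ₐ[ℚ] ℚ) : R3 →+* ℚ) := fun r => ⟨C r, by simp⟩
  exact ⟨(Ideal.quotEquivOfEq ker_aeval0.symm).trans
    (RingHom.quotientKerEquivOfSurjective hsurj)⟩
end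
end

section
/- In ℚ[c₁,c₂,c₃], the ideal generated by −2c₁, 2c₁², and −2c₃ + 2c₁c₂ − 2c₁³ equals the ideal (c₁, c₃), and the quotient ring ℚ[c₁,c₂,c₃]/(c₁, c₃) is isomorphic to the polynomial ring ℚ[X] in one variable. -/
noncomputable section

/-!
Once `2` is a unit, `-2 c₁` generates `c₁`, `2 c₁²` is a multiple of it, and
`-2 c₃ + 2 c₁ c₂ - 2 c₁³ ≡ -2 c₃` modulo `c₁`; so the three relations generate `(c₁, c₃)`.
Killing all variables but `X i` leaves the polynomial ring in `X i`: the evaluation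
`X i ↦ X`, `X j ↦ 0` descends to the quotient and is inverted by `X ↦ X i`.
-/

theorem Ideal.span_relations_eq_span_pair {R : Type*} [CommRing R] (h2 : IsUnit (2 : R))
    (a b c : R) :
    Ideal.span {-2 * a, 2 * a ^ 2, -2 * c + 2 * (a * b) - 2 * a ^ 3} = Ideal.span {a, c} := by
  obtain ⟨v, hv⟩ := h2.exists_right_inv
  apply le_antisymm
  · rw [Ideal.span_le, Set.insert_subset_iff, Set.insert_subset_iff, Set.singleton_subset_iff]
    refine ⟨?_, ?_, ?_⟩ <;> refine Submodule.mem_span_pair.2 ?_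
    · exact ⟨-2, 0, by simp only [smul_eq_mul]; ring⟩
    · exact ⟨2 * a, 0, by simp only [smul_eq_mul]; ring⟩
    · exact ⟨2 * b - 2 * a ^ 2, -2, by simp only [smul_eq_mul]; ring⟩
  · rw [Ideal.span_le, Set.insert_subset_iff, Set.singleton_subset_iff]
    refine ⟨?_, ?_⟩ <;> refine Submodule.mem_span_triple.2 ?_
    · exact ⟨-v, 0, 0, by simp only [smul_eq_mul]; linear_combination a * hv⟩
    · exact ⟨-v * (b - a ^ 2), 0, -v, by simp only [smul_eq_mul]; linear_combination c * hv⟩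

namespace MvPolynomial

variable {R σ : Type*} [CommRing R] [DecidableEq σ] (i : σ)

theorem aeval_single_X_eq_zero_of_mem_span {p : MvPolynomial σ R}
    (hp : p ∈ Ideal.span (X '' {i}ᶜ : Set (MvPolynomial σ R))) :
    aeval (Pi.single i (Polynomial.X : Polynomial R)) p = 0 := by
  refine Submodule.span_induction ?_ (map_zero _)
    (fun _ _ _ _ hp hq => by rw [map_add, hp, hq, add_zero])
    (fun q _ _ hp => by rw [smul_eq_mul, map_mul, hp, mul_zero]) hp
  rintro _ ⟨j, hj, rfl⟩
  simp [Pi.single_eq_of_ne hj]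

def quotientSpanXImageComplToPolynomial :
    (MvPolynomial σ R ⧸ Ideal.span (X '' {i}ᶜ : Set (MvPolynomial σ R))) →ₐ[R] Polynomial R :=
  Ideal.Quotient.liftₐ _ (aeval (Pi.single i Polynomial.X))
    fun _ => aeval_single_X_eq_zero_of_mem_span i

@[simp]
theorem quotientSpanXImageComplToPolynomial_mk (p : MvPolynomial σ R) :
    quotientSpanXImageComplToPolynomial i (Ideal.Quotient.mk _ p) =
      aeval (Pi.single i Polynomial.X) p :=
  rfl

def quotientSpanXImageComplAlgEquiv :
    (MvPolynomial σ R ⧸ Ideal.span (X '' {i}ᶜ : Set (MvPolynomial σ R))) ≃ₐ[R] Polynomial R :=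
  AlgEquiv.ofAlgHom (quotientSpanXImageComplToPolynomial i)
    (Polynomial.aeval (Ideal.Quotient.mk _ (X i)))
    (Polynomial.algHom_ext (by simp))
    (Ideal.Quotient.algHom_ext _ (algHom_ext fun j => by
      by_cases hj : j = i
      · simp [hj]
      · simpa [Pi.single_eq_of_ne hj] using
          (Ideal.Quotient.eq_zero_iff_mem.2 (Ideal.subset_span (Set.mem_image_of_mem X hj))).symm))

end MvPolynomial

theorem stmt_4 :
    (Ideal.span {(-2 * cc 0 : R3), (2 * cc 0 ^ 2 : R3),
        (-2 * cc 2 + 2 * (cc 0 * cc 1) - 2 * cc 0 ^ 3 : R3)}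
      = Ideal.span {cc 0, cc 2}) ∧
    Nonempty ((R3 ⧸ Ideal.span {(cc 0 : R3), cc 2}) ≃+* Polynomial ℚ) := by
  have h2 : IsUnit (2 : R3) := by
    simpa only [map_ofNat] using (IsUnit.mk0 (2 : ℚ) two_ne_zero).map (algebraMap ℚ R3)
  have hspan : Ideal.span {cc 0, cc 2} = Ideal.span (MvPolynomial.X '' {(1 : Fin 3)}ᶜ) := by
    rw [show ({1}ᶜ : Set (Fin 3)) = {0, 2} by ext j; fin_cases j <;> simp, Set.image_pair]; rfl
  refine ⟨Ideal.span_relations_eq_span_pair h2 _ _ _, ?_⟩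
  rw [hspan]
  exact ⟨(MvPolynomial.quotientSpanXImageComplAlgEquiv 1).toRingEquiv⟩
end
end
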